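/- Let n be a positive integer, let x⋆ ∈ {0,1}^n, and let Q be a symmetric real n×n matrix with the x⋆-sign pattern, i.e., Q_{ij} > 0 whenever x⋆_i x⋆_j = 1 and Q_{ij} < 0 otherwise. Then for every x ∈ {0,1}^n with x ≠ x⋆ there exists an index k such that f_Q(flip_k(x)) > f_Q(x). Consequently, x⋆ is the unique 1-bit-flip local maximum of f_Q on {0,1}^n, i.e., x⋆ is the only point x satisfying f_Q(flip_k(x)) ≤ f_Q(x) for all k. -/

import Mathlib

/-!
Flipping bit `k` changes `f_Q` by `±(Q k k + ∑_{j ≠ k} (Q k j + Q j k) x j)`, the sign being `+`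
when the bit is switched on. If `x⋆ k = 0`, row and column `k` of `Q` are negative, so switching
bit `k` off pays; if `x⋆ k = 1` and `x ≤ x⋆`, every entry met is positive, so switching it on
pays. A binary `x ≠ x⋆` either has a bit on outside `x⋆`, or satisfies `x ≤ x⋆` and misses a bit
of `x⋆`; either way some flip improves. At `x⋆` itself both effects make every flip worse.
-/

/-- UBQP objective `f_Q(x) = xᵀQx`. -/
def fQ {n : ℕ} (Q : Fin n → Fin n → ℝ) (x : Fin n → ℝ) : ℝ :=
  ∑ i, ∑ j, Q i j * x i * x j

/-- `flipBit x k` is `x` with its `k`-th coordinate flipped (`0 ↔ 1` on binary vectors). -/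
def flipBit {n : ℕ} (x : Fin n → ℝ) (k : Fin n) : Fin n → ℝ :=
  Function.update x k (1 - x k)

/-- `x` is a binary (0/1) vector. -/
def IsBinary {n : ℕ} (x : Fin n → ℝ) : Prop := ∀ i, x i = 0 ∨ x i = 1

/-- `Q` has the `x⋆`-sign pattern: `Q i j > 0` whenever `x⋆_i x⋆_j = 1`, and `Q i j < 0`
otherwise. -/
def SignPattern {n : ℕ} (xs : Fin n → ℝ) (Q : Fin n → Fin n → ℝ) : Prop :=
  ∀ i j, (xs i * xs j = 1 → 0 < Q i j) ∧ (xs i * xs j ≠ 1 → Q i j < 0)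

open Finset

section

variable {n : ℕ} (Q : Fin n → Fin n → ℝ)

theorem fQ_eq_diag_add_cross_add_erase (y : Fin n → ℝ) (k : Fin n) :
    fQ Q y = Q k k * y k * y k + y k * ∑ j ∈ univ.erase k, (Q k j + Q j k) * y j
      + ∑ i ∈ univ.erase k, ∑ j ∈ univ.erase k, Q i j * y i * y j := by
  have hsplit (g : Fin n → ℝ) : ∑ j, g j = g k + ∑ j ∈ univ.erase k, g j :=
    (add_sum_erase _ _ (mem_univ k)).symm
  have hcross : y k * ∑ j ∈ univ.erase k, (Q k j + Q j k) * y j =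
      ∑ j ∈ univ.erase k, Q k j * y k * y j + ∑ i ∈ univ.erase k, Q i k * y i * y k := by
    rw [mul_sum, ← sum_add_distrib]
    exact sum_congr rfl fun j _ => by ring
  unfold fQ
  rw [hsplit, hsplit, sum_congr rfl fun i _ => hsplit fun j => Q i j * y i * y j,
    sum_add_distrib, hcross]
  ring

def marginalGain (x : Fin n → ℝ) (k : Fin n) : ℝ :=
  Q k k + ∑ j ∈ univ.erase k, (Q k j + Q j k) * x j

theorem fQ_flipBit (x : Fin n → ℝ) (k : Fin n) :
    fQ Q (flipBit x k) = fQ Q x + (1 - 2 * x k) * marginalGain Q x k := by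
  have hflip_ne : ∀ j ∈ univ.erase k, flipBit x k j = x j := fun j hj =>
    Function.update_of_ne (ne_of_mem_erase hj) _ _
  rw [fQ_eq_diag_add_cross_add_erase Q (flipBit x k) k, fQ_eq_diag_add_cross_add_erase Q x k,
    sum_congr rfl fun j hj => by rw [hflip_ne j hj],
    sum_congr rfl fun i hi => sum_congr rfl fun j hj => by rw [hflip_ne i hi, hflip_ne j hj],
    flipBit, Function.update_self, marginalGain]
  ring

theorem IsBinary.nonneg {x : Fin n → ℝ} (hx : IsBinary x) (i : Fin n) : 0 ≤ x i := by
  rcases hx i with h | h <;> simp [h]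

variable {Q} {xs : Fin n → ℝ}

theorem marginalGain_neg (hQ : SignPattern xs Q) {x : Fin n → ℝ} (hx : ∀ j, 0 ≤ x j)
    {k : Fin n} (hk : xs k = 0) : marginalGain Q x k < 0 := by
  have hneg : ∀ j, Q k j < 0 ∧ Q j k < 0 := fun j =>
    ⟨(hQ k j).2 (by simp [hk]), (hQ j k).2 (by simp [hk])⟩
  have hsum : ∑ j ∈ univ.erase k, (Q k j + Q j k) * x j ≤ 0 :=
    sum_nonpos fun j _ => mul_nonpos_of_nonpos_of_nonneg
      (add_nonpos (hneg j).1.le (hneg j).2.le) (hx j)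
  unfold marginalGain
  linarith [(hneg k).1]

theorem marginalGain_pos (hQ : SignPattern xs Q) {x : Fin n → ℝ} (hx : ∀ j, 0 ≤ x j)
    (hsupp : ∀ j, x j ≠ 0 → xs j = 1) {k : Fin n} (hk : xs k = 1) :
    0 < marginalGain Q x k := by
  have hterm : ∀ j, 0 ≤ (Q k j + Q j k) * x j := fun j => by
    by_cases hxj : x j = 0
    · simp [hxj]
    · have hj := hsupp j hxj
      exact mul_nonneg (add_nonneg ((hQ k j).1 (by simp [hk, hj])).le
        ((hQ j k).1 (by simp [hk, hj])).le) (hx j)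
  have hQkk : 0 < Q k k := (hQ k k).1 (by simp [hk])
  unfold marginalGain
  linarith [sum_nonneg fun j (_ : j ∈ univ.erase k) => hterm j]

theorem exists_fQ_lt_fQ_flipBit (hxs : IsBinary xs) (hQ : SignPattern xs Q) {x : Fin n → ℝ}
    (hx : IsBinary x) (hne : x ≠ xs) : ∃ k, fQ Q x < fQ Q (flipBit x k) := by
  by_cases hout : ∃ k, x k = 1 ∧ xs k = 0
  · obtain ⟨k, hxk, hxsk⟩ := hout
    refine ⟨k, ?_⟩
    rw [fQ_flipBit, hxk]
    linarith [marginalGain_neg hQ hx.nonneg hxsk]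
  · push Not at hout
    have hsupp : ∀ j, x j ≠ 0 → xs j = 1 := fun j hxj =>
      (hxs j).resolve_left (hout j ((hx j).resolve_left hxj))
    obtain ⟨k, hk⟩ := Function.ne_iff.mp hne
    have hxk : x k = 0 := (hx k).resolve_right fun h => hk (h.trans (hsupp k (by simp [h])).symm)
    have hxsk : xs k = 1 := (hxs k).resolve_left fun h => hk (hxk.trans h.symm)
    refine ⟨k, ?_⟩
    rw [fQ_flipBit, hxk]
    linarith [marginalGain_pos hQ hx.nonneg hsupp hxsk]

theorem fQ_flipBit_lt (hxs : IsBinary xs) (hQ : SignPattern xs Q) (k : Fin n) :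
    fQ Q (flipBit xs k) < fQ Q xs := by
  rw [fQ_flipBit]
  rcases hxs k with hk | hk
  · rw [hk]
    linarith [marginalGain_neg hQ hxs.nonneg hk]
  · rw [hk]
    linarith [marginalGain_pos hQ hxs.nonneg (fun j hj => (hxs j).resolve_left hj) hk]

end

theorem signPattern_unique_local_max_general {n : ℕ}
    (xs : Fin n → ℝ) (hxs : IsBinary xs)
    (Q : Fin n → Fin n → ℝ)
    (hQ : SignPattern xs Q) :
    (∀ x : Fin n → ℝ, IsBinary x → x ≠ xs → ∃ k, fQ Q x < fQ Q (flipBit x k)) ∧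
    (∀ k, fQ Q (flipBit xs k) ≤ fQ Q xs) ∧
    (∀ x : Fin n → ℝ, IsBinary x → (∀ k, fQ Q (flipBit x k) ≤ fQ Q x) → x = xs) := by
  have improve := fun x (hx : IsBinary x) => exists_fQ_lt_fQ_flipBit hxs hQ hx
  refine ⟨improve, fun k => (fQ_flipBit_lt hxs hQ k).le, fun x hx hmax => ?_⟩
  by_contra hne
  obtain ⟨k, hk⟩ := improve x hx hne
  exact (hmax k).not_gt hk

/-- for a matrix with the `x⋆`-sign pattern, every binary `x ≠ x⋆` admits a
strictly improving one-bit flip; consequently `x⋆` is the unique 1-bit-flip local maximum. -/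
theorem signPattern_unique_local_max {n : ℕ} (hn : 0 < n)
    (xs : Fin n → ℝ) (hxs : IsBinary xs)
    (Q : Fin n → Fin n → ℝ) (hQsymm : ∀ i j, Q i j = Q j i)
    (hQ : SignPattern xs Q) :
    (∀ x : Fin n → ℝ, IsBinary x → x ≠ xs → ∃ k, fQ Q x < fQ Q (flipBit x k)) ∧
    (∀ k, fQ Q (flipBit xs k) ≤ fQ Q xs) ∧
    (∀ x : Fin n → ℝ, IsBinary x → (∀ k, fQ Q (flipBit x k) ≤ fQ Q x) → x = xs) :=
  signPattern_unique_local_max_general xs hxs Q hQ
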